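/- arXiv:2310.04439 — 2 statements merged into one kernel-verified Lean document; each statement's English description precedes it below -/
import Mathlib

section
/- For every positive integer n, (F_{2n+1}F_{2n-1})² + (F_{2n}F_{2n-1})² = (F_{2n+1}F_{2n-1}) · F_{4n-1} + F_{2n}F_{2n-1}; that is, the number with leading digit F_{2n+1}F_{2n-1} and trailing digit F_{2n}F_{2n-1} is a fixed point of the sum-of-squares-of-digits map in base b = F_{4n-1}. -/
lemma cassini_even (k : ℕ) :
    Nat.fib (2 * k + 1) * Nat.fib (2 * k + 3) = Nat.fib (2 * k + 2) ^ 2 + 1 := by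
  induction k with
  | zero => decide
  | succ k ih =>
    have h3 : Nat.fib (2 * k + 3) = Nat.fib (2 * k + 1) + Nat.fib (2 * k + 2) :=
      Nat.fib_add_two
    have h4 : Nat.fib (2 * k + 4) = Nat.fib (2 * k + 2) + Nat.fib (2 * k + 3) :=
      Nat.fib_add_two
    have h5 : Nat.fib (2 * k + 5) = Nat.fib (2 * k + 3) + Nat.fib (2 * k + 4) :=
      Nat.fib_add_two
    have e1 : 2 * (k + 1) + 1 = 2 * k + 3 := by ring
    have e2 : 2 * (k + 1) + 2 = 2 * k + 4 := by ring
    have e3 : 2 * (k + 1) + 3 = 2 * k + 5 := by ring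
    rw [e1, e2, e3, h5, h4, h3]
    nlinarith [ih]

theorem fib_companion_a (n : ℕ) (hn : 1 ≤ n) :
    (Nat.fib (2 * n + 1) * Nat.fib (2 * n - 1)) ^ 2 +
      (Nat.fib (2 * n) * Nat.fib (2 * n - 1)) ^ 2 =
      (Nat.fib (2 * n + 1) * Nat.fib (2 * n - 1)) * Nat.fib (4 * n - 1) +
        Nat.fib (2 * n) * Nat.fib (2 * n - 1) := by
  obtain ⟨m, rfl⟩ := Nat.exists_eq_add_of_le hn
  have e1 : 2 * (1 + m) - 1 = 2 * m + 1 := by omega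
  have e2 : 2 * (1 + m) = 2 * m + 2 := by ring
  have e3 : 2 * (1 + m) + 1 = 2 * m + 3 := by ring
  have e4 : 4 * (1 + m) - 1 = 2 * (2 * m + 1) + 1 := by omega
  rw [e3, e1, e2, e4, Nat.fib_two_mul_add_one (2 * m + 1)]
  have h3 : Nat.fib (2 * m + 3) = Nat.fib (2 * m + 1) + Nat.fib (2 * m + 2) :=
    Nat.fib_add_two
  have hc := cassini_even m
  rw [h3] at hc ⊢
  have e5 : 2 * m + 1 + 1 = 2 * m + 2 := by ring
  rw [e5]
  nlinarith [hc, sq_nonneg (Nat.fib (2 * m + 1)), sq_nonneg (Nat.fib (2 * m + 2))]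
end

section
/- Let N = 2n - 1 with n ≥ 2, let k ≥ 0, and let 0 ≤ i ≤ n - 1. Set b = F_{N+1} + F_{N+2}·k, x_0 = F_i + F_{i+1}·k, x_1 = F_{N-i} + F_{N-i+1}·k, y_0 = F_{2i+1} + F_{2i+2}·k, y_1 = F_{N-(2i+1)} + F_{N-2i}·k. Then x_1² + x_0² = y_1·b + y_0. -/
open Nat in
lemma cassini_sq (j : ℕ) :
    ((Nat.fib (j+1) : ℤ)^2 - Nat.fib (j+1) * Nat.fib j - (Nat.fib j)^2)^2 = 1 := by
  induction j with
  | zero => norm_num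
  | succ m ih =>
    have h : Nat.fib (m + 2) = Nat.fib m + Nat.fib (m + 1) := Nat.fib_add_two
    rw [h]
    push_cast
    linear_combination ih

open Nat in
lemma key (c j k : ℕ) :
    (Nat.fib (2*j + c + 1) + Nat.fib (2*j + 1 + c + 1) * k)^2
      + (Nat.fib c + Nat.fib (c+1) * k)^2 =
    (Nat.fib (2*j) + Nat.fib (2*j+1) * k)
        * (Nat.fib (2*j + 1 + 2*c + 1) + Nat.fib (2*j + 1 + (2*c+1) + 1) * k)
      + (Nat.fib (2*c+1) + Nat.fib (2*c+2) * k) := by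
  have e1 : fib (2*j + c + 1) = fib (2*j) * fib c + fib (2*j+1) * fib (c+1) :=
    Nat.fib_add _ _
  have e2 : fib (2*j + 1 + c + 1) = fib (2*j+1) * fib c + fib (2*j+2) * fib (c+1) :=
    Nat.fib_add _ _
  have e3 : fib (2*j + 1 + 2*c + 1) = fib (2*j+1) * fib (2*c) + fib (2*j+2) * fib (2*c+1) :=
    Nat.fib_add _ _
  have e4 : fib (2*j + 1 + (2*c+1) + 1)
      = fib (2*j+1) * fib (2*c+1) + fib (2*j+2) * fib (2*c+2) := Nat.fib_add _ _
  have e5 : fib (2*j+2) = fib (2*j) + fib (2*j+1) := Nat.fib_add_two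
  have e6 : fib (2*c+2) = fib (2*c) + fib (2*c+1) := Nat.fib_add_two
  have hV : fib (2*j+1) = fib (j+1)^2 + fib j^2 := Nat.fib_two_mul_add_one j
  have hT : fib (2*c+1) = fib (c+1)^2 + fib c^2 := Nat.fib_two_mul_add_one c
  have hU : fib (2*j) + fib (2*j+1) = fib j * fib (j+1) + fib (j+1) * (fib j + fib (j+1)) := by
    have h := Nat.fib_add j (j+1)
    have h2 : j + (j+1) + 1 = 2*j+2 := by ring
    have h3 : j + 1 + 1 = j + 2 := rfl
    rw [h2, h3, Nat.fib_add_two, Nat.fib_add_two] at h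
    exact h
  have hS : fib (2*c) + fib (2*c+1) = fib c * fib (c+1) + fib (c+1) * (fib c + fib (c+1)) := by
    have h := Nat.fib_add c (c+1)
    have h2 : c + (c+1) + 1 = 2*c+2 := by ring
    have h3 : c + 1 + 1 = c + 2 := rfl
    rw [h2, h3, Nat.fib_add_two, Nat.fib_add_two] at h
    exact h
  -- integer versions, solving for fib(2j) and fib(2c)
  have hUZ : (fib (2*j) : ℤ) = 2 * fib j * fib (j+1) - (fib j)^2 := by
    zify at hU hV ⊢; linarith [hU, hV]
  have hSZ : (fib (2*c) : ℤ) = 2 * fib c * fib (c+1) - (fib c)^2 := by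
    zify at hS hT ⊢; linarith [hS, hT]
  have hf := cassini_sq j
  rw [e1, e2, e3, e4, e5, e6, hV, hT]
  zify
  rw [hUZ, hSZ]
  linear_combination ((Nat.fib (c+1):ℤ)^2 * (1 + k - k^2)) * hf

theorem arith_fib_cycle_I (n : ℕ) (hn : 2 ≤ n) (N : ℕ) (hN : N = 2 * n - 1)
    (k : ℕ) (i : ℕ) (hi : i ≤ n - 1) :
    (Nat.fib (N - i) + Nat.fib (N - i + 1) * k) ^ 2 +
        (Nat.fib i + Nat.fib (i + 1) * k) ^ 2 =
      (Nat.fib (N - (2 * i + 1)) + Nat.fib (N - 2 * i) * k) *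
          (Nat.fib (N + 1) + Nat.fib (N + 2) * k) +
        (Nat.fib (2 * i + 1) + Nat.fib (2 * i + 2) * k) := by
  set j := n - 1 - i with hj
  have h1 : N - i = 2*j + i + 1 := by omega
  have h2 : N - i + 1 = 2*j + 1 + i + 1 := by omega
  have h3 : N - (2*i+1) = 2*j := by omega
  have h4 : N - 2*i = 2*j + 1 := by omega
  have h5 : N + 1 = 2*j + 1 + 2*i + 1 := by omega
  have h6 : N + 2 = 2*j + 1 + (2*i+1) + 1 := by omega
  rw [h2, h1, h3, h4, h5, h6]
  exact key i j k
end
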